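/- Let m ≥ 1 be an integer and let z be a complex number with Re z > -m such that z is not a nonpositive integer. Then the integral ∫₀^∞ s^{z-1} (e^{-s} - 1)^m e^{-s} ds converges absolutely and equals Γ(z) · Σ_{k=0}^{m} binom(m,k) (-1)^{m-k} (k+1)^{-z}. -/

import Mathlib

/-!
Expanding `(e^{-s} - 1)^m e^{-s}` by the binomial theorem writes it as a combination of the
exponentials `e^{-(k+1)s}`, whose Mellin transforms are `Γ(z) (k+1)^{-z}`; this gives the formula
for `Re z > 0`. The function is `O(s^m)` at `0` and `O(e^{-s})` at infinity, so its Mellin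
transform converges and is holomorphic for `Re z > -m`. Multiplying both sides by the Pochhammer
polynomial `z (z+1) ⋯ (z+n-1)` turns `Γ(z)` into `Γ(z+n)`, which has no poles there for `n ≥ m`,
so the identity theorem extends the formula to the whole half-plane, away from the poles of `Γ`.
-/

open MeasureTheory Set Filter Asymptotics Topology Complex

lemma ne_neg_natCast_of_re_pos {s : ℂ} (hs : 0 < s.re) (k : ℕ) : s ≠ -k := by
  rintro rfl
  simp only [neg_re, natCast_re, Left.neg_pos_iff] at hs
  exact (Nat.cast_nonneg k).not_gt hs

lemma Gamma_add_nat_eq_ascPochhammer_mul {z : ℂ} (hz : ∀ k : ℕ, z ≠ -k) (n : ℕ) :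
    Gamma (z + n) = (ascPochhammer ℂ n).eval z * Gamma z :=
  (div_eq_iff (Gamma_ne_zero hz)).mp (Gamma_add_nat_div_Gamma_eq z hz)

theorem mellin_eq_Gamma_mul_of_isBigO_rpow_exp {f : ℝ → ℂ} {g : ℂ → ℂ} {a b : ℝ} (ha : 0 < a)
    (hfc : LocallyIntegrableOn f (Ioi 0)) (hf_top : f =O[atTop] fun t => Real.exp (-a * t))
    (hf_bot : f =O[𝓝[>] 0] (· ^ (-b))) (hg : Differentiable ℂ g)
    (hfg : ∀ w : ℂ, 0 < w.re → mellin f w = Gamma w * g w)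
    {z : ℂ} (hbz : b < z.re) (hz : ∀ k : ℕ, z ≠ -k) : mellin f z = Gamma z * g z := by
  obtain ⟨n, hn⟩ := exists_nat_ge (-b)
  set P := ascPochhammer ℂ n
  have hre {w : ℂ} (hw : b < w.re) : 0 < (w + n).re := by
    rw [add_re, natCast_re]
    linarith
  have hU : IsOpen {w : ℂ | b < w.re} := isOpen_lt continuous_const continuous_re
  set c : ℝ := max 0 b + 1
  have hc : {w : ℂ | max 0 b < w.re} ∈ 𝓝 (c : ℂ) :=
    (isOpen_lt continuous_const continuous_re).mem_nhds (by
      simpa only [mem_ofPred_eq, ofReal_re] using lt_add_one _)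
  have hextend : EqOn (fun w => P.eval w * mellin f w) (fun w => Gamma (w + n) * g w)
      {w | b < w.re} := by
    refine AnalyticOnNhd.eqOn_of_preconnected_of_eventuallyEq (𝕜 := ℂ) (z₀ := c) ?_ ?_
      (convex_halfSpace_re_gt b).isPreconnected ((le_max_right 0 b).trans_lt (by simp [c])) ?_
    · refine DifferentiableOn.analyticOnNhd (fun w hw => ?_) hU
      exact ((P.differentiable w).mul
        (mellin_differentiableAt_of_isBigO_rpow_exp ha hfc hf_top hf_bot hw)).differentiableWithinAt
    · refine DifferentiableOn.analyticOnNhd (fun w hw => ?_) hU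
      exact (((differentiableAt_Gamma _ (ne_neg_natCast_of_re_pos (hre hw))).comp w
        (differentiableAt_id.add_const _)).mul (hg w)).differentiableWithinAt
    · filter_upwards [hc] with w hw
      have hw0 : 0 < w.re := (le_max_left 0 b).trans_lt hw
      rw [hfg w hw0, Gamma_add_nat_eq_ascPochhammer_mul (ne_neg_natCast_of_re_pos hw0)]
      ring
  have hPz : P.eval z ≠ 0 := by
    refine left_ne_zero_of_mul (b := Gamma z) ?_
    rw [← Gamma_add_nat_eq_ascPochhammer_mul hz]
    exact Gamma_ne_zero_of_re_pos (hre hbz)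
  have hz_eq : P.eval z * mellin f z = Gamma (z + n) * g z := hextend hbz
  rw [Gamma_add_nat_eq_ascPochhammer_mul hz, mul_assoc] at hz_eq
  exact mul_left_cancel₀ hPz hz_eq

lemma norm_cexp_neg_sub_one {t : ℝ} (ht : 0 ≤ t) : ‖cexp (-(t : ℂ)) - 1‖ = 1 - Real.exp (-t) := by
  rw [← ofReal_neg, ← ofReal_exp, ← ofReal_one, ← ofReal_sub, norm_real, Real.norm_eq_abs,
    abs_sub_comm, abs_of_nonneg (by simpa using ht)]

noncomputable def expSubOnePowMulExp (m : ℕ) (t : ℝ) : ℂ :=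
  (cexp (-(t : ℂ)) - 1) ^ m * cexp (-(t : ℂ))

noncomputable def binomialDirichletSum (m : ℕ) (w : ℂ) : ℂ :=
  ∑ k ∈ Finset.range (m + 1), (m.choose k : ℂ) * (-1) ^ (m - k) * ((k : ℂ) + 1) ^ (-w)

lemma differentiable_binomialDirichletSum (m : ℕ) : Differentiable ℂ (binomialDirichletSum m) :=
  Differentiable.fun_sum fun k _ => (differentiable_id.neg.const_cpow
    (Or.inl (by exact_mod_cast k.succ_ne_zero))).const_mul _

namespace expSubOnePowMulExp

lemma eq_sum (m : ℕ) (t : ℝ) :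
    expSubOnePowMulExp m t = ∑ k ∈ Finset.range (m + 1),
      (m.choose k : ℂ) * (-1) ^ (m - k) * (Real.exp (-((k : ℝ) + 1) * t) : ℂ) := by
  rw [expSubOnePowMulExp, sub_eq_add_neg, add_pow, Finset.sum_mul]
  refine Finset.sum_congr rfl fun k _ => ?_
  rw [ofReal_exp, show ((-((k : ℝ) + 1) * t : ℝ) : ℂ) = k * -t + -t by push_cast; ring, exp_add,
    exp_nat_mul]
  ring

lemma norm_eq {m : ℕ} {t : ℝ} (ht : 0 ≤ t) :
    ‖expSubOnePowMulExp m t‖ = (1 - Real.exp (-t)) ^ m * Real.exp (-t) := by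
  rw [expSubOnePowMulExp, norm_mul, norm_pow, norm_cexp_neg_sub_one ht, ← ofReal_neg,
    norm_exp_ofReal]

lemma norm_le_pow {m : ℕ} {t : ℝ} (ht : 0 ≤ t) : ‖expSubOnePowMulExp m t‖ ≤ t ^ m := by
  rw [norm_eq ht]
  calc (1 - Real.exp (-t)) ^ m * Real.exp (-t) ≤ t ^ m * 1 := by
        gcongr
        · simpa using ht
        · linarith [Real.add_one_le_exp (-t)]
        · simpa using ht
    _ = t ^ m := mul_one _

lemma norm_le_exp {m : ℕ} {t : ℝ} (ht : 0 ≤ t) : ‖expSubOnePowMulExp m t‖ ≤ Real.exp (-t) := by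
  rw [norm_eq ht]
  exact mul_le_of_le_one_left (Real.exp_nonneg _)
    (pow_le_one₀ (by simpa using ht) (by linarith [Real.exp_pos (-t)]))

lemma continuous (m : ℕ) : Continuous (expSubOnePowMulExp m) := by
  unfold expSubOnePowMulExp; fun_prop

lemma isBigO_atTop (m : ℕ) : expSubOnePowMulExp m =O[atTop] fun t => Real.exp (-1 * t) := by
  refine IsBigO.of_bound 1 ?_
  filter_upwards [eventually_ge_atTop 0] with t ht
  simpa [abs_of_nonneg (Real.exp_nonneg _)] using norm_le_exp (m := m) ht

lemma isBigO_nhdsGT_zero (m : ℕ) :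
    expSubOnePowMulExp m =O[𝓝[>] 0] (· ^ (-(-m : ℝ))) := by
  refine IsBigO.of_bound 1 ?_
  filter_upwards [self_mem_nhdsWithin] with t (ht : 0 < t)
  simpa [abs_of_nonneg ht.le] using norm_le_pow (m := m) ht.le

lemma locallyIntegrableOn (m : ℕ) : LocallyIntegrableOn (expSubOnePowMulExp m) (Ioi 0) :=
  (continuous m).locallyIntegrable.locallyIntegrableOn _

lemma mellinConvergent {m : ℕ} {z : ℂ} (hz : -(m : ℝ) < z.re) :
    MellinConvergent (expSubOnePowMulExp m) z :=
  mellinConvergent_of_isBigO_rpow_exp one_pos (locallyIntegrableOn m) (isBigO_atTop m)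
    (isBigO_nhdsGT_zero m) hz

lemma mellin_of_re_pos (m : ℕ) {w : ℂ} (hw : 0 < w.re) :
    mellin (expSubOnePowMulExp m) w = Gamma w * binomialDirichletSum m w := by
  have hchoose {k : ℕ} (hk : k ∉ Finset.range (m + 1)) : (m.choose k : ℂ) = 0 := by
    rw [Nat.choose_eq_zero_of_lt (by simpa using hk), Nat.cast_zero]
  have hsum : HasSum (fun k : ℕ => Gamma w * ((m.choose k : ℂ) * (-1) ^ (m - k)) /
      ((k + 1 : ℝ) : ℂ) ^ w) (mellin (expSubOnePowMulExp m) w) := by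
    refine hasSum_mellin (fun k => Or.inr (by positivity)) hw (fun t _ => ?_) ?_
    · rw [eq_sum]
      exact hasSum_sum_of_ne_finset_zero fun k hk => by
        simp [hchoose hk]
    · refine summable_of_ne_finset_zero (s := Finset.range (m + 1)) fun k hk => ?_
      simp [hchoose hk]
  rw [hsum.unique (hasSum_sum_of_ne_finset_zero fun k hk => by simp [hchoose hk]),
    binomialDirichletSum, Finset.mul_sum]
  refine Finset.sum_congr rfl fun k _ => ?_
  push_cast
  rw [cpow_neg, div_eq_mul_inv]
  ring

lemma mellin_eq {m : ℕ} {z : ℂ} (hzre : -(m : ℝ) < z.re) (hz : ∀ k : ℕ, z ≠ -k) :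
    mellin (expSubOnePowMulExp m) z = Gamma z * binomialDirichletSum m z :=
  mellin_eq_Gamma_mul_of_isBigO_rpow_exp one_pos (locallyIntegrableOn m) (isBigO_atTop m)
    (isBigO_nhdsGT_zero m) (differentiable_binomialDirichletSum m)
    (fun _ hw => mellin_of_re_pos m hw) hzre hz

end expSubOnePowMulExp

theorem stmt_0 (m : ℕ) (z : ℂ) (hzre : -(m : ℝ) < z.re)
    (hz : ∀ n : ℤ, n ≤ 0 → z ≠ (n : ℂ)) :
    IntegrableOn
      (fun s : ℝ => (s : ℂ) ^ (z - 1) * (Complex.exp (-(s : ℂ)) - 1) ^ m *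
        Complex.exp (-(s : ℂ))) (Ioi 0) volume ∧
    ∫ s in Ioi (0 : ℝ),
        (s : ℂ) ^ (z - 1) * (Complex.exp (-(s : ℂ)) - 1) ^ m * Complex.exp (-(s : ℂ))
      = Complex.Gamma z *
          ∑ k ∈ Finset.range (m + 1),
            (m.choose k : ℂ) * (-1) ^ (m - k) * ((k : ℂ) + 1) ^ (-z) := by
  have hintegrand : (fun s : ℝ => (s : ℂ) ^ (z - 1) * (cexp (-(s : ℂ)) - 1) ^ m * cexp (-(s : ℂ)))
      = fun s : ℝ => (s : ℂ) ^ (z - 1) • expSubOnePowMulExp m s := by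
    funext s
    rw [expSubOnePowMulExp, smul_eq_mul, mul_assoc]
  rw [hintegrand]
  refine ⟨expSubOnePowMulExp.mellinConvergent hzre,
    expSubOnePowMulExp.mellin_eq hzre fun k hk => hz (-k) (by simp) (by simpa using hk)⟩
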